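/- In the unlearning setup with coherence definitions, there is a constant c > 0 depending only on d, n_r and n_f such that for every integer k ≥ 1, Tr(N_k) ≥ c · ( (√C_r + √C_f)² (n_r n_f)² λ_max(D)² / (2 σ²) )^k, where σ is the unlearning coherence. In particular, if (√C_r + √C_f) n_r n_f λ_max(D) > √2 σ then Tr(N_k) → ∞ as k → ∞. -/

import Mathlib

open Matrix Filter Finset Set
open scoped BigOperators

noncomputable section

/-- Frobenius norm of a real square matrix. -/
def frob {n : Type*} [Fintype n] (M : Matrix n n ℝ) : ℝ :=
  Real.sqrt (∑ i, ∑ j, (M i j) ^ 2)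

open Classical in
/-- The positive semidefinite square root of a matrix (junk value `0` on non-PSD input). -/
def psdSqrt {n : Type*} [Fintype n] [DecidableEq n] (A : Matrix n n ℝ) : Matrix n n ℝ :=
  if h : A.PosSemidef then
    (h.1.eigenvectorUnitary : Matrix n n ℝ) * diagonal (Real.sqrt ∘ h.1.eigenvalues) *
      (star (h.1.eigenvectorUnitary : Matrix n n ℝ))
  else 0

open Classical in
/-- The largest eigenvalue of a symmetric real matrix (junk value `0` otherwise). -/
def lamMax {n : Type*} [Fintype n] [DecidableEq n] (A : Matrix n n ℝ) : ℝ :=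
  if h : A.IsHermitian then ⨆ i, h.eigenvalues i else 0

/-- Probability of observing the Bernoulli(B/n) selection pattern `x`. -/
def selProb (n B : ℕ) (x : Fin n → Bool) : ℝ :=
  ∏ i, if x i then (B : ℝ) / n else 1 - (B : ℝ) / n

/-- Average Hessian of a family. -/
def Hbar {d n : ℕ} (H : Fin n → Matrix (Fin d) (Fin d) ℝ) : Matrix (Fin d) (Fin d) ℝ :=
  (n : ℝ)⁻¹ • ∑ i, H i

/-- Mean update operator `J = I − η(1−α)H_R + ηα H_F`. -/
def Jbar {d nr nf : ℕ} (η α : ℝ) (HR : Fin nr → Matrix (Fin d) (Fin d) ℝ)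
    (HF : Fin nf → Matrix (Fin d) (Fin d) ℝ) : Matrix (Fin d) (Fin d) ℝ :=
  1 - (η * (1 - α)) • Hbar HR + (η * α) • Hbar HF

/-- Random update operator for the batch-selection pattern `x`. -/
def Jop {d nr nf : ℕ} (η α : ℝ) (B : ℕ) (HR : Fin nr → Matrix (Fin d) (Fin d) ℝ)
    (HF : Fin nf → Matrix (Fin d) (Fin d) ℝ)
    (x : (Fin nr → Bool) × (Fin nf → Bool)) : Matrix (Fin d) (Fin d) ℝ :=
  1 - (η * (1 - α) / B) • (∑ r, if x.1 r then HR r else 0)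
    + (η * α / B) • (∑ f, if x.2 f then HF f else 0)

/-- `C_r = η²(1−α)²(1/n_r)(1/B − 1/n_r)`. -/
def Crc (η α : ℝ) (B nr : ℕ) : ℝ :=
  η ^ 2 * (1 - α) ^ 2 * (nr : ℝ)⁻¹ * ((B : ℝ)⁻¹ - (nr : ℝ)⁻¹)

/-- `C_f = η²α²(1/n_f)(1/B − 1/n_f)`. -/
def Cfc (η α : ℝ) (B nf : ℕ) : ℝ :=
  η ^ 2 * α ^ 2 * (nf : ℝ)⁻¹ * ((B : ℝ)⁻¹ - (nf : ℝ)⁻¹)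

/-- Noise-accumulation matrices `N_k`. -/
def Nmat {d nr nf : ℕ} (η α : ℝ) (B : ℕ) (HR : Fin nr → Matrix (Fin d) (Fin d) ℝ)
    (HF : Fin nf → Matrix (Fin d) (Fin d) ℝ) : ℕ → Matrix (Fin d) (Fin d) ℝ
  | 0 => 1
  | k + 1 =>
      Cfc η α B nf • ∑ f, HF f * Nmat η α B HR HF k * HF f
        + Crc η α B nr • ∑ r, HR r * Nmat η α B HR HF k * HR r

/-- `W_k = J_{k−1} ⋯ J_1 J_0` for a finite sequence of batch selections. -/
def Wk {d nr nf : ℕ} (η α : ℝ) (B : ℕ) (HR : Fin nr → Matrix (Fin d) (Fin d) ℝ)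
    (HF : Fin nf → Matrix (Fin d) (Fin d) ℝ) {k : ℕ}
    (s : Fin k → (Fin nr → Bool) × (Fin nf → Bool)) : Matrix (Fin d) (Fin d) ℝ :=
  (List.ofFn fun i => Jop η α B HR HF (s i)).reverse.prod

/-- `E‖w_k‖² = E Tr(W_k W_kᵀ)`, the expectation taken over the i.i.d. Bernoulli
batch selections of the `k` steps. -/
def Ewk2 {d nr nf : ℕ} (η α : ℝ) (B : ℕ) (HR : Fin nr → Matrix (Fin d) (Fin d) ℝ)
    (HF : Fin nf → Matrix (Fin d) (Fin d) ℝ) (k : ℕ) : ℝ :=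
  ∑ s : Fin k → (Fin nr → Bool) × (Fin nf → Bool),
    (∏ i, selProb nr B (s i).1 * selProb nf B (s i).2) *
      (Wk η α B HR HF s * (Wk η α B HR HF s)ᵀ).trace

/-- `E[(e₁ᵀ w_k)²]`, i.e. the `(i0,i0)` entry of `E[W_k W_kᵀ]`. -/
def Ee1 {d nr nf : ℕ} (η α : ℝ) (B : ℕ) (HR : Fin nr → Matrix (Fin d) (Fin d) ℝ)
    (HF : Fin nf → Matrix (Fin d) (Fin d) ℝ) (i0 : Fin d) (k : ℕ) : ℝ :=
  ∑ s : Fin k → (Fin nr → Bool) × (Fin nf → Bool),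
    (∏ i, selProb nr B (s i).1 * selProb nf B (s i).2) *
      ((Wk η α B HR HF s * (Wk η α B HR HF s)ᵀ) i0 i0)

/-- Mixed Hessian `D_{rf} = C'_r H_r^R + C'_f H_f^F` for a retain/forget pair. -/
def Drf {d nr nf : ℕ} (Cr' Cf' : ℝ) (HR : Fin nr → Matrix (Fin d) (Fin d) ℝ)
    (HF : Fin nf → Matrix (Fin d) (Fin d) ℝ) (p : Fin nr × Fin nf) :
    Matrix (Fin d) (Fin d) ℝ :=
  Cr' • HR p.1 + Cf' • HF p.2

/-- Mix-Hessian `D = (1/(n_r n_f)) Σ_{r,f} D_{rf}`. -/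
def Dmix {d nr nf : ℕ} (Cr' Cf' : ℝ) (HR : Fin nr → Matrix (Fin d) (Fin d) ℝ)
    (HF : Fin nf → Matrix (Fin d) (Fin d) ℝ) : Matrix (Fin d) (Fin d) ℝ :=
  ((nr : ℝ) * nf)⁻¹ • ∑ p : Fin nr × Fin nf, Drf Cr' Cf' HR HF p

/-- Mix-coherence matrix `S_{(r,f),(r',f')} = ‖D_{rf}^{1/2} D_{r'f'}^{1/2}‖_F`. -/
def Smat {d nr nf : ℕ} (Cr' Cf' : ℝ) (HR : Fin nr → Matrix (Fin d) (Fin d) ℝ)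
    (HF : Fin nf → Matrix (Fin d) (Fin d) ℝ) :
    Matrix (Fin nr × Fin nf) (Fin nr × Fin nf) ℝ :=
  Matrix.of fun p q =>
    frob (psdSqrt (Drf Cr' Cf' HR HF p) * psdSqrt (Drf Cr' Cf' HR HF q))

/-- Unlearning coherence `σ = λ_max(S) / max_{(r,f)} λ_max(D_{rf})`. -/
def cohSigma {d nr nf : ℕ} (Cr' Cf' : ℝ) (HR : Fin nr → Matrix (Fin d) (Fin d) ℝ)
    (HF : Fin nf → Matrix (Fin d) (Fin d) ℝ) : ℝ :=
  lamMax (Smat Cr' Cf' HR HF) / ⨆ p : Fin nr × Fin nf, lamMax (Drf Cr' Cf' HR HF p)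

/-- Stacked filter-weight vector of the two-layer ReLU CNN signal-plus-noise model. -/
def wvec (d mfil : ℕ) (μ ξi : Fin d → ℝ) (yi : ℝ)
    (ai bi : Bool → Fin mfil → Bool) : (Bool × Fin mfil) × Fin d → ℝ :=
  fun p =>
    ((if p.1.1 then (1 : ℝ) else -1) / mfil) *
      ((if ai p.1.1 p.1.2 then (1 : ℝ) else 0) * μ p.2 +
        (if bi p.1.1 p.1.2 then (1 : ℝ) else 0) * yi * ξi p.2)

/-- Per-sample Hessian `H_i = ℓ''_i w_i w_iᵀ` of the signal-plus-noise model. -/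
def hessCNN (d mfil : ℕ) (μ ξi : Fin d → ℝ) (yi ℓi : ℝ)
    (ai bi : Bool → Fin mfil → Bool) :
    Matrix ((Bool × Fin mfil) × Fin d) ((Bool × Fin mfil) × Fin d) ℝ :=
  ℓi • vecMulVec (wvec d mfil μ ξi yi ai bi) (wvec d mfil μ ξi yi ai bi)

/-- Mixed Hessian `D_{rf} = C'_r H_r + C'_f H_{n_r+f}` in the CNN model, with the
retain set given by the first `n_r` samples and the forget set by the last `n_f`. -/
def DrfCNN (d mfil nr nf : ℕ) (μ : Fin d → ℝ) (ξ : Fin (nr + nf) → Fin d → ℝ)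
    (y ℓ : Fin (nr + nf) → ℝ) (a b : Fin (nr + nf) → Bool → Fin mfil → Bool)
    (Cr' Cf' : ℝ) (p : Fin nr × Fin nf) :
    Matrix ((Bool × Fin mfil) × Fin d) ((Bool × Fin mfil) × Fin d) ℝ :=
  Cr' • hessCNN d mfil μ (ξ (Fin.castAdd nf p.1)) (y (Fin.castAdd nf p.1))
        (ℓ (Fin.castAdd nf p.1)) (a (Fin.castAdd nf p.1)) (b (Fin.castAdd nf p.1))
    + Cf' • hessCNN d mfil μ (ξ (Fin.natAdd nr p.2)) (y (Fin.natAdd nr p.2))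
        (ℓ (Fin.natAdd nr p.2)) (a (Fin.natAdd nr p.2)) (b (Fin.natAdd nr p.2))

/-- Mix-coherence matrix of the CNN model. -/
def SmatCNN (d mfil nr nf : ℕ) (μ : Fin d → ℝ) (ξ : Fin (nr + nf) → Fin d → ℝ)
    (y ℓ : Fin (nr + nf) → ℝ) (a b : Fin (nr + nf) → Bool → Fin mfil → Bool)
    (Cr' Cf' : ℝ) : Matrix (Fin nr × Fin nf) (Fin nr × Fin nf) ℝ :=
  Matrix.of fun p q =>
    frob (psdSqrt (DrfCNN d mfil nr nf μ ξ y ℓ a b Cr' Cf' p) *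
      psdSqrt (DrfCNN d mfil nr nf μ ξ y ℓ a b Cr' Cf' q))

/-! Let `p` maximise `λ_max(D_p)`, put `λ := λ_max(D_p)` and let `u` be a unit top eigenvector
of `D_p`. With `a = √C_f H_f u` and `b = √C_r H_r u` we have `a + b = (√C_r + √C_f) λ u`, so
`uᵀ N_{k+1} u ≥ aᵀ N_k a + bᵀ N_k b ≥ ½ (a + b)ᵀ N_k (a + b)`, whence
`Tr N_k ≥ uᵀ N_k u ≥ ((√C_r + √C_f)² λ² / 2)^k`. On the other side, for a unit top eigenvector `w`
of `Σ_p D_p` and `x_p = ‖D_p^{1/2} w‖`, Cauchy–Schwarz in Frobenius norm bounds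
`(n_r n_f λ_max(D))² = Σ_{p,q} wᵀ D_p D_q w` by
`xᵀ S x ≤ λ_max(S) ‖x‖² = λ_max(S) n_r n_f λ_max(D)`, so `n_r n_f λ_max(D) ≤ λ_max(S) = σ λ`
and the claim holds with `c = 1`. -/

namespace Matrix

section

variable {m : Type*} [Fintype m]

lemma IsHermitian.dotProduct_mulVec_comm {A : Matrix m m ℝ} (hA : A.IsHermitian) (x y : m → ℝ) :
    x ⬝ᵥ A *ᵥ y = A *ᵥ x ⬝ᵥ y := by
  rw [dotProduct_mulVec, ← mulVec_transpose, (isHermitian_iff_isSymm.mp hA).eq]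

lemma PosSemidef.dotProduct_mulVec_self_nonneg {A : Matrix m m ℝ} (hA : A.PosSemidef)
    (x : m → ℝ) : 0 ≤ x ⬝ᵥ A *ᵥ x := by
  simpa using hA.dotProduct_mulVec_nonneg x

lemma PosSemidef.dotProduct_add_mulVec_add_le {N : Matrix m m ℝ}
    (hN : N.PosSemidef) (a b : m → ℝ) :
    (a + b) ⬝ᵥ N *ᵥ (a + b) ≤ 2 * (a ⬝ᵥ N *ᵥ a + b ⬝ᵥ N *ᵥ b) := by
  have hab := hN.dotProduct_mulVec_self_nonneg (a - b)
  have hcomm := hN.1.dotProduct_mulVec_comm a b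
  rw [dotProduct_comm (N *ᵥ a)] at hcomm
  simp only [mulVec_add, mulVec_sub, add_dotProduct, sub_dotProduct, dotProduct_add,
    dotProduct_sub] at hab ⊢
  linarith

lemma IsHermitian.dotProduct_mul_mul_self_mulVec {H : Matrix m m ℝ} (hH : H.IsHermitian)
    (N : Matrix m m ℝ) (u : m → ℝ) :
    u ⬝ᵥ (H * N * H) *ᵥ u = H *ᵥ u ⬝ᵥ N *ᵥ H *ᵥ u := by
  rw [← mulVec_mulVec, ← mulVec_mulVec, hH.dotProduct_mulVec_comm]

variable [DecidableEq m]

lemma IsHermitian.eigenvalues_le_lamMax {A : Matrix m m ℝ} (hA : A.IsHermitian) (i : m) :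
    hA.eigenvalues i ≤ lamMax A := by
  rw [lamMax, dif_pos hA]; exact le_ciSup (Set.finite_range _).bddAbove i

lemma IsHermitian.posSemidef_smul_one_sub {A : Matrix m m ℝ} (hA : A.IsHermitian) {μ : ℝ}
    (hμ : ∀ i, hA.eigenvalues i ≤ μ) : (μ • 1 - A).PosSemidef := by
  have hD : (diagonal fun i => μ - hA.eigenvalues i).PosSemidef :=
    posSemidef_diagonal_iff.mpr fun i => sub_nonneg.mpr (hμ i)
  convert hD.mul_mul_conjTranspose_same (hA.eigenvectorUnitary : Matrix m m ℝ) using 1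
  conv_lhs => rw [hA.spectral_theorem, ← Algebra.algebraMap_eq_smul_one,
    ← AlgHomClass.commutes (Unitary.conjStarAlgAut ℝ _ hA.eigenvectorUnitary), ← map_sub,
    Unitary.conjStarAlgAut_apply]
  congr 2
  ext i j
  by_cases hij : i = j <;> simp [hij, algebraMap_eq_diagonal]

lemma IsHermitian.dotProduct_mulVec_le_lamMax {A : Matrix m m ℝ} (hA : A.IsHermitian)
    (x : m → ℝ) : x ⬝ᵥ A *ᵥ x ≤ lamMax A * (x ⬝ᵥ x) := by
  have h := (hA.posSemidef_smul_one_sub hA.eigenvalues_le_lamMax).dotProduct_mulVec_self_nonneg x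
  rwa [sub_mulVec, smul_mulVec, one_mulVec, dotProduct_sub, dotProduct_smul, smul_eq_mul,
    sub_nonneg] at h

lemma IsHermitian.diag_le_lamMax {A : Matrix m m ℝ} (hA : A.IsHermitian) (i : m) :
    A i i ≤ lamMax A := by
  simpa [mulVec_single, dotProduct, Pi.single_apply] using
    hA.dotProduct_mulVec_le_lamMax (Pi.single i 1)

lemma IsHermitian.exists_mulVec_eq_lamMax_smul [Nonempty m] {A : Matrix m m ℝ}
    (hA : A.IsHermitian) : ∃ u : m → ℝ, u ⬝ᵥ u = 1 ∧ A *ᵥ u = lamMax A • u := by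
  obtain ⟨j, hj⟩ : ∃ j, hA.eigenvalues j = lamMax A := by
    rw [lamMax, dif_pos hA]; exact exists_eq_ciSup_of_finite
  refine ⟨hA.eigenvectorBasis j, ?_, hj ▸ hA.mulVec_eigenvectorBasis j⟩
  have h := real_inner_self_eq_norm_sq (hA.eigenvectorBasis j)
  rw [hA.eigenvectorBasis.orthonormal.1 j, EuclideanSpace.inner_eq_star_dotProduct] at h
  simpa using h

lemma PosSemidef.lamMax_pos {A : Matrix m m ℝ} (hA : A.PosSemidef) (h0 : A ≠ 0) :
    0 < lamMax A := by
  by_contra! hle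
  refine h0 (hA.1.eigenvalues_eq_zero_iff.mp (funext fun i => ?_))
  exact le_antisymm ((hA.1.eigenvalues_le_lamMax i).trans hle) (hA.eigenvalues_nonneg i)

lemma PosSemidef.dotProduct_mulVec_le_trace {N : Matrix m m ℝ} (hN : N.PosSemidef) {u : m → ℝ}
    (hu : u ⬝ᵥ u = 1) : u ⬝ᵥ N *ᵥ u ≤ N.trace := by
  have h := hN.1.dotProduct_mulVec_le_lamMax u
  rw [hu, mul_one] at h
  refine h.trans ?_
  have hsum : N.trace = ∑ i, hN.1.eigenvalues i := by simpa using hN.1.trace_eq_sum_eigenvalues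
  rw [hsum, lamMax, dif_pos hN.1]
  exact Real.iSup_le (fun i => Finset.single_le_sum (fun j _ => hN.eigenvalues_nonneg j)
    (Finset.mem_univ i)) (Finset.sum_nonneg fun j _ => hN.eigenvalues_nonneg j)

lemma PosSemidef.lamMax_nonneg [Nonempty m] {A : Matrix m m ℝ} (hA : A.PosSemidef) :
    0 ≤ lamMax A :=
  (hA.eigenvalues_nonneg (Classical.arbitrary m)).trans (hA.1.eigenvalues_le_lamMax _)

lemma PosSemidef.posSemidef_psdSqrt {A : Matrix m m ℝ} (hA : A.PosSemidef) :
    (psdSqrt A).PosSemidef := by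
  rw [psdSqrt, dif_pos hA]
  exact (posSemidef_diagonal_iff.mpr fun i => Real.sqrt_nonneg _).mul_mul_conjTranspose_same _

lemma PosSemidef.psdSqrt_mul_self {A : Matrix m m ℝ} (hA : A.PosSemidef) :
    psdSqrt A * psdSqrt A = A := by
  set U : Matrix m m ℝ := (hA.1.eigenvectorUnitary : Matrix m m ℝ)
  have hUU : star U * U = 1 := mem_unitaryGroup_iff'.mp hA.1.eigenvectorUnitary.2
  have hdd : diagonal (Real.sqrt ∘ hA.1.eigenvalues) * diagonal (Real.sqrt ∘ hA.1.eigenvalues)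
      = diagonal (RCLike.ofReal ∘ hA.1.eigenvalues) := by
    rw [diagonal_mul_diagonal]
    congr 1
    funext i
    simp [Real.mul_self_sqrt (hA.eigenvalues_nonneg i)]
  conv_rhs => rw [hA.1.spectral_theorem, Unitary.conjStarAlgAut_apply]
  rw [psdSqrt, dif_pos hA]
  simp only [mul_assoc]
  rw [← mul_assoc (star _) (_ : Matrix m m ℝ), hUU, one_mul, ← mul_assoc (diagonal _), hdd]

lemma PosSemidef.psdSqrt_mulVec_dotProduct_self {A : Matrix m m ℝ} (hA : A.PosSemidef)
    (w : m → ℝ) : psdSqrt A *ᵥ w ⬝ᵥ psdSqrt A *ᵥ w = w ⬝ᵥ A *ᵥ w := by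
  rw [← hA.posSemidef_psdSqrt.1.dotProduct_mulVec_comm, mulVec_mulVec, hA.psdSqrt_mul_self]

end

end Matrix

section

variable {m : Type*} [Fintype m]

lemma frob_nonneg (M : Matrix m m ℝ) : 0 ≤ frob M := Real.sqrt_nonneg _

lemma frob_transpose (M : Matrix m m ℝ) : frob Mᵀ = frob M := by
  rw [frob, frob, Finset.sum_comm]
  rfl

lemma dotProduct_mulVec_le_frob (a b : m → ℝ) (M : Matrix m m ℝ) :
    a ⬝ᵥ M *ᵥ b ≤ √(a ⬝ᵥ a) * frob M * √(b ⬝ᵥ b) := by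
  have hcs := Real.sum_mul_le_sqrt_mul_sqrt (Finset.univ : Finset (m × m))
    (fun ij => a ij.1 * b ij.2) (fun ij => M ij.1 ij.2)
  simp only [Fintype.sum_prod_type, mul_pow, ← Finset.mul_sum, ← Finset.sum_mul] at hcs
  rw [Real.sqrt_mul (Finset.sum_nonneg fun i _ => sq_nonneg (a i))] at hcs
  convert hcs using 1
  · simp only [dotProduct, mulVec, Finset.mul_sum]
    exact Finset.sum_congr rfl fun i _ => Finset.sum_congr rfl fun j _ => by ring
  · simp only [frob, dotProduct, ← sq]
    ring

end

def coherenceMatrix {ι m : Type*} [Fintype m] [DecidableEq m] (D : ι → Matrix m m ℝ) :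
    Matrix ι ι ℝ :=
  Matrix.of fun p q => frob (psdSqrt (D p) * psdSqrt (D q))

section

variable {ι m : Type*} [Fintype m] [DecidableEq m] {D : ι → Matrix m m ℝ}

lemma isHermitian_coherenceMatrix (hD : ∀ p, (D p).PosSemidef) :
    (coherenceMatrix D).IsHermitian := by
  refine Matrix.IsHermitian.ext fun p q => ?_
  simp only [coherenceMatrix, Matrix.of_apply, star_trivial]
  rw [← frob_transpose, Matrix.transpose_mul,
    (Matrix.isHermitian_iff_isSymm.mp (hD p).posSemidef_psdSqrt.1).eq,
    (Matrix.isHermitian_iff_isSymm.mp (hD q).posSemidef_psdSqrt.1).eq]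

lemma dotProduct_mulVec_mulVec_le_coherenceMatrix (hD : ∀ p, (D p).PosSemidef) (w : m → ℝ)
    (p q : ι) :
    w ⬝ᵥ D p *ᵥ D q *ᵥ w ≤
      √(w ⬝ᵥ D p *ᵥ w) * coherenceMatrix D p q * √(w ⬝ᵥ D q *ᵥ w) := by
  set P := psdSqrt (D p)
  set Q := psdSqrt (D q)
  have hPQ : P *ᵥ w ⬝ᵥ (P * Q) *ᵥ Q *ᵥ w = w ⬝ᵥ (P * P) *ᵥ (Q * Q) *ᵥ w := by
    rw [← (hD p).posSemidef_psdSqrt.1.dotProduct_mulVec_comm]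
    simp only [mulVec_mulVec, mul_assoc]
    rfl
  rw [(hD p).psdSqrt_mul_self, (hD q).psdSqrt_mul_self] at hPQ
  rw [← hPQ, ← (hD p).psdSqrt_mulVec_dotProduct_self, ← (hD q).psdSqrt_mulVec_dotProduct_self]
  exact dotProduct_mulVec_le_frob _ _ _

lemma le_lamMax_coherenceMatrix [Fintype ι] [DecidableEq ι] [Nonempty ι]
    (hD : ∀ p, (D p).PosSemidef) {w : m → ℝ} (hw : w ⬝ᵥ w = 1) {t : ℝ}
    (ht : (∑ p, D p) *ᵥ w = t • w) : t ≤ lamMax (coherenceMatrix D) := by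
  set S := coherenceMatrix D
  have hS := isHermitian_coherenceMatrix hD
  set x : ι → ℝ := fun p => √(w ⬝ᵥ D p *ᵥ w)
  have hxx : x ⬝ᵥ x = t := by
    calc x ⬝ᵥ x = ∑ p, w ⬝ᵥ D p *ᵥ w := by
          simp only [dotProduct, x]
          exact Finset.sum_congr rfl fun p _ =>
            Real.mul_self_sqrt ((hD p).dotProduct_mulVec_self_nonneg w)
      _ = t := by
          rw [← dotProduct_sum, ← sum_mulVec, ht, dotProduct_smul, hw, smul_eq_mul, mul_one]
  have htt : t * t = ∑ p, ∑ q, w ⬝ᵥ D p *ᵥ D q *ᵥ w := by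
    have h : w ⬝ᵥ (∑ p, D p) *ᵥ (∑ q, D q) *ᵥ w = t * t := by
      rw [ht, mulVec_smul, ht, dotProduct_smul, dotProduct_smul, hw, smul_eq_mul, smul_eq_mul,
        mul_one]
    simp only [← h, sum_mulVec, mulVec_sum, dotProduct_sum]
    exact Finset.sum_comm
  have hquad : t * t ≤ lamMax S * t := by
    calc t * t ≤ ∑ p, ∑ q, x p * S p q * x q := by
          rw [htt]
          exact Finset.sum_le_sum fun p _ => Finset.sum_le_sum fun q _ =>
            dotProduct_mulVec_mulVec_le_coherenceMatrix hD w p q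
      _ = x ⬝ᵥ S *ᵥ x := by
          simp only [dotProduct, Matrix.mulVec, Finset.mul_sum]
          exact Finset.sum_congr rfl fun p _ => Finset.sum_congr rfl fun q _ => by ring
      _ ≤ lamMax S * t := hxx ▸ hS.dotProduct_mulVec_le_lamMax x
  rcases le_or_gt t 0 with h | h
  · obtain ⟨p⟩ := ‹Nonempty ι›
    exact h.trans (frob_nonneg _ |>.trans (hS.diag_le_lamMax p))
  · exact le_of_mul_le_mul_right hquad h

end

lemma Crc_nonneg (η α : ℝ) {B nr : ℕ} (hB : 0 < B) (hBnr : B ≤ nr) : 0 ≤ Crc η α B nr := by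
  have hinv : (nr : ℝ)⁻¹ ≤ (B : ℝ)⁻¹ := inv_anti₀ (by exact_mod_cast hB) (by exact_mod_cast hBnr)
  unfold Crc
  have := sub_nonneg.mpr hinv
  positivity

lemma Cfc_nonneg (η α : ℝ) {B nf : ℕ} (hB : 0 < B) (hBnf : B ≤ nf) : 0 ≤ Cfc η α B nf := by
  have hinv : (nf : ℝ)⁻¹ ≤ (B : ℝ)⁻¹ := inv_anti₀ (by exact_mod_cast hB) (by exact_mod_cast hBnf)
  unfold Cfc
  have := sub_nonneg.mpr hinv
  positivity

section Nmat

variable {d nr nf : ℕ} {η α : ℝ} {B : ℕ} {HR : Fin nr → Matrix (Fin d) (Fin d) ℝ}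
  {HF : Fin nf → Matrix (Fin d) (Fin d) ℝ}

lemma Nmat_posSemidef (hCr : 0 ≤ Crc η α B nr) (hCf : 0 ≤ Cfc η α B nf)
    (hHR : ∀ r, (HR r).PosSemidef) (hHF : ∀ f, (HF f).PosSemidef) (k : ℕ) :
    (Nmat η α B HR HF k).PosSemidef := by
  induction k with
  | zero => exact PosSemidef.one
  | succ k ih =>
    have hconj : ∀ {H : Matrix (Fin d) (Fin d) ℝ}, H.PosSemidef →
        (H * Nmat η α B HR HF k * H).PosSemidef := fun {H} hH => by
      simpa only [hH.1.eq] using ih.mul_mul_conjTranspose_same H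
    exact ((posSemidef_sum _ fun f _ => hconj (hHF f)).smul hCf).add
      ((posSemidef_sum _ fun r _ => hconj (hHR r)).smul hCr)

lemma dotProduct_Nmat_succ_ge (hCr : 0 ≤ Crc η α B nr) (hCf : 0 ≤ Cfc η α B nf)
    (hHR : ∀ r, (HR r).PosSemidef) (hHF : ∀ f, (HF f).PosSemidef) (k : ℕ) (r : Fin nr)
    (f : Fin nf) (u : Fin d → ℝ) :
    Cfc η α B nf * (HF f *ᵥ u ⬝ᵥ Nmat η α B HR HF k *ᵥ HF f *ᵥ u)
        + Crc η α B nr * (HR r *ᵥ u ⬝ᵥ Nmat η α B HR HF k *ᵥ HR r *ᵥ u)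
      ≤ u ⬝ᵥ Nmat η α B HR HF (k + 1) *ᵥ u := by
  have hN := Nmat_posSemidef hCr hCf hHR hHF k
  simp only [Nmat, add_mulVec, smul_mulVec, sum_mulVec, dotProduct_add, dotProduct_smul,
    dotProduct_sum, smul_eq_mul, (hHF _).1.dotProduct_mul_mul_self_mulVec,
    (hHR _).1.dotProduct_mul_mul_self_mulVec]
  gcongr
  · exact Finset.single_le_sum (fun f _ => hN.dotProduct_mulVec_self_nonneg (HF f *ᵥ u))
      (Finset.mem_univ f)
  · exact Finset.single_le_sum (fun r _ => hN.dotProduct_mulVec_self_nonneg (HR r *ᵥ u))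
      (Finset.mem_univ r)

lemma pow_le_dotProduct_Nmat (hCr : 0 ≤ Crc η α B nr) (hCf : 0 ≤ Cfc η α B nf)
    (hHR : ∀ r, (HR r).PosSemidef) (hHF : ∀ f, (HF f).PosSemidef) {r : Fin nr} {f : Fin nf}
    {u : Fin d → ℝ} (hu : u ⬝ᵥ u = 1) {μ : ℝ}
    (hμ : (√(Crc η α B nr) • HR r + √(Cfc η α B nf) • HF f) *ᵥ u = μ • u) (k : ℕ) :
    (μ ^ 2 / 2) ^ k ≤ u ⬝ᵥ Nmat η α B HR HF k *ᵥ u := by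
  induction k with
  | zero => simp [Nmat, hu]
  | succ k ih =>
    set N := Nmat η α B HR HF k
    set a := √(Cfc η α B nf) • HF f *ᵥ u
    set b := √(Crc η α B nr) • HR r *ᵥ u
    have hab : a + b = μ • u := by
      rw [← hμ, add_mulVec, smul_mulVec, smul_mulVec, add_comm]
    have ha : a ⬝ᵥ N *ᵥ a = Cfc η α B nf * (HF f *ᵥ u ⬝ᵥ N *ᵥ HF f *ᵥ u) := by
      simp only [a, mulVec_smul, dotProduct_smul, smul_dotProduct, smul_eq_mul]
      rw [← mul_assoc, Real.mul_self_sqrt hCf]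
    have hb : b ⬝ᵥ N *ᵥ b = Crc η α B nr * (HR r *ᵥ u ⬝ᵥ N *ᵥ HR r *ᵥ u) := by
      simp only [b, mulVec_smul, dotProduct_smul, smul_dotProduct, smul_eq_mul]
      rw [← mul_assoc, Real.mul_self_sqrt hCr]
    have hstep : μ ^ 2 * (u ⬝ᵥ N *ᵥ u) ≤ 2 * (u ⬝ᵥ Nmat η α B HR HF (k + 1) *ᵥ u) := by
      calc μ ^ 2 * (u ⬝ᵥ N *ᵥ u) = (a + b) ⬝ᵥ N *ᵥ (a + b) := by
            rw [hab, mulVec_smul, dotProduct_smul, smul_dotProduct, smul_eq_mul, smul_eq_mul]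
            ring
        _ ≤ 2 * (a ⬝ᵥ N *ᵥ a + b ⬝ᵥ N *ᵥ b) :=
            (Nmat_posSemidef hCr hCf hHR hHF k).dotProduct_add_mulVec_add_le a b
        _ ≤ 2 * (u ⬝ᵥ Nmat η α B HR HF (k + 1) *ᵥ u) := by
            rw [ha, hb]
            gcongr
            exact dotProduct_Nmat_succ_ge hCr hCf hHR hHF k r f u
    calc (μ ^ 2 / 2) ^ (k + 1) = μ ^ 2 / 2 * (μ ^ 2 / 2) ^ k := pow_succ' _ _
      _ ≤ μ ^ 2 / 2 * (u ⬝ᵥ N *ᵥ u) := by gcongr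
      _ ≤ u ⬝ᵥ Nmat η α B HR HF (k + 1) *ᵥ u := by linarith

lemma pow_le_trace_Nmat [Nonempty (Fin d)] (hCr : 0 ≤ Crc η α B nr) (hCf : 0 ≤ Cfc η α B nf)
    (hHR : ∀ r, (HR r).PosSemidef) (hHF : ∀ f, (HF f).PosSemidef) {Cr' Cf' : ℝ}
    {p : Fin nr × Fin nf} (hDp : (Drf Cr' Cf' HR HF p).PosSemidef)
    (hCr' : (√(Crc η α B nr) + √(Cfc η α B nf)) * Cr' = √(Crc η α B nr))
    (hCf' : (√(Crc η α B nr) + √(Cfc η α B nf)) * Cf' = √(Cfc η α B nf)) (k : ℕ) :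
    (((√(Crc η α B nr) + √(Cfc η α B nf)) * lamMax (Drf Cr' Cf' HR HF p)) ^ 2 / 2) ^ k
      ≤ (Nmat η α B HR HF k).trace := by
  obtain ⟨u, hu, huD⟩ := hDp.1.exists_mulVec_eq_lamMax_smul
  have hsum : √(Crc η α B nr) • HR p.1 + √(Cfc η α B nf) • HF p.2
      = (√(Crc η α B nr) + √(Cfc η α B nf)) • Drf Cr' Cf' HR HF p := by
    rw [Drf, smul_add, smul_smul, smul_smul, hCr', hCf']
  refine (pow_le_dotProduct_Nmat (r := p.1) (f := p.2) hCr hCf hHR hHF hu ?_ k).trans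
    ((Nmat_posSemidef hCr hCf hHR hHF k).dotProduct_mulVec_le_trace hu)
  rw [hsum, smul_mulVec, huD, smul_smul]

end Nmat

section Mix

variable {d nr nf : ℕ} {Cr' Cf' : ℝ} {HR : Fin nr → Matrix (Fin d) (Fin d) ℝ}
  {HF : Fin nf → Matrix (Fin d) (Fin d) ℝ}

lemma Dmix_posSemidef (hD : ∀ p, (Drf Cr' Cf' HR HF p).PosSemidef) :
    (Dmix Cr' Cf' HR HF).PosSemidef :=
  (posSemidef_sum _ fun p _ => hD p).smul (by positivity)

lemma mul_lamMax_Dmix_le_lamMax_Smat [Nonempty (Fin d)] [Nonempty (Fin nr × Fin nf)]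
    (hD : ∀ p, (Drf Cr' Cf' HR HF p).PosSemidef) :
    ((nr : ℝ) * nf) * lamMax (Dmix Cr' Cf' HR HF) ≤ lamMax (Smat Cr' Cf' HR HF) := by
  obtain ⟨w, hw, hwD⟩ := (Dmix_posSemidef hD).1.exists_mulVec_eq_lamMax_smul
  obtain ⟨r, f⟩ := Classical.arbitrary (Fin nr × Fin nf)
  have hP : ((nr : ℝ) * nf) ≠ 0 := by
    have := r.pos; have := f.pos; positivity
  refine le_lamMax_coherenceMatrix hD hw ?_
  have hsum : ∑ p, Drf Cr' Cf' HR HF p = ((nr : ℝ) * nf) • Dmix Cr' Cf' HR HF := by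
    rw [Dmix, smul_inv_smul₀ hP]
  rw [hsum, smul_mulVec, hwD, smul_smul]

lemma iSup_lamMax_Drf_pos [Nonempty (Fin nr × Fin nf)]
    (hD : ∀ p, (Drf Cr' Cf' HR HF p).PosSemidef)
    {p₀ : Fin nr × Fin nf} (hp₀ : Drf Cr' Cf' HR HF p₀ ≠ 0) :
    0 < ⨆ p, lamMax (Drf Cr' Cf' HR HF p) :=
  ((hD p₀).lamMax_pos hp₀).trans_le
    (le_ciSup (f := fun p => lamMax (Drf Cr' Cf' HR HF p)) (Set.finite_range _).bddAbove p₀)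

lemma mul_lamMax_Dmix_le_cohSigma_mul [Nonempty (Fin d)] [Nonempty (Fin nr × Fin nf)]
    (hD : ∀ p, (Drf Cr' Cf' HR HF p).PosSemidef) (hM : 0 < ⨆ p, lamMax (Drf Cr' Cf' HR HF p)) :
    ((nr : ℝ) * nf) * lamMax (Dmix Cr' Cf' HR HF)
      ≤ cohSigma Cr' Cf' HR HF * ⨆ p, lamMax (Drf Cr' Cf' HR HF p) := by
  rw [cohSigma, div_mul_cancel₀ _ hM.ne']
  exact mul_lamMax_Dmix_le_lamMax_Smat hD

end Mix

lemma sq_mul_sq_mul_sq_div_le {s P L σ μ : ℝ} (hL : 0 ≤ P * L) (h : P * L ≤ σ * μ) :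
    s ^ 2 * P ^ 2 * L ^ 2 / (2 * σ ^ 2) ≤ (s * μ) ^ 2 / 2 := by
  rcases eq_or_ne σ 0 with rfl | hσ
  · -- division by `0` makes the left side `0`
    simp only [ne_eq, OfNat.ofNat_ne_zero, not_false_eq_true, zero_pow, mul_zero, div_zero]
    positivity
  · rw [div_le_div_iff₀ (by positivity) two_pos]
    have h2 : (P * L) ^ 2 ≤ (σ * μ) ^ 2 := pow_le_pow_left₀ hL h 2
    nlinarith [sq_nonneg s]

lemma one_lt_sq_mul_sq_mul_sq_div {s P L σ μ : ℝ} (hs : 0 ≤ s) (hμ : 0 < μ) (hL : 0 ≤ P * L)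
    (hle : P * L ≤ σ * μ) (h : √2 * σ < s * P * L) :
    1 < s ^ 2 * P ^ 2 * L ^ 2 / (2 * σ ^ 2) := by
  have hσ : 0 < σ := by
    refine lt_of_le_of_ne (nonneg_of_mul_nonneg_left (hL.trans hle) hμ) fun hσ => ?_
    rw [← hσ, zero_mul] at hle
    rw [← hσ, mul_zero, mul_assoc] at h
    exact (mul_nonpos_of_nonneg_of_nonpos hs hle).not_gt h
  rw [one_lt_div (by positivity)]
  have h2 : (√2 * σ) ^ 2 < (s * P * L) ^ 2 := pow_lt_pow_left₀ h (by positivity) two_ne_zero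
  rw [mul_pow, Real.sq_sqrt zero_le_two] at h2
  linarith [show (s * P * L) ^ 2 = s ^ 2 * P ^ 2 * L ^ 2 by ring]

theorem stmt14_general (d nr nf : ℕ) :
    ∃ c : ℝ, 0 < c ∧
      ∀ (B : ℕ) (η α : ℝ)
        (HR : Fin nr → Matrix (Fin d) (Fin d) ℝ)
        (HF : Fin nf → Matrix (Fin d) (Fin d) ℝ),
        0 < B → B ≤ nr → B ≤ nf → 0 < η → α ∈ Set.Icc (0 : ℝ) 1 →
        (∀ r, (HR r).PosSemidef) → (∀ f, (HF f).PosSemidef) →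
        0 < Real.sqrt (Crc η α B nr) + Real.sqrt (Cfc η α B nf) →
        (let Cr' : ℝ := Real.sqrt (Crc η α B nr) /
            (Real.sqrt (Crc η α B nr) + Real.sqrt (Cfc η α B nf))
         let Cf' : ℝ := Real.sqrt (Cfc η α B nf) /
            (Real.sqrt (Crc η α B nr) + Real.sqrt (Cfc η α B nf))
         let σ : ℝ := cohSigma Cr' Cf' HR HF
         (∃ p : Fin nr × Fin nf, Drf Cr' Cf' HR HF p ≠ 0) →
         (∀ k, 1 ≤ k →
            c * ((Real.sqrt (Crc η α B nr) + Real.sqrt (Cfc η α B nf)) ^ 2 *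
                ((nr : ℝ) * nf) ^ 2 * lamMax (Dmix Cr' Cf' HR HF) ^ 2 /
                  (2 * σ ^ 2)) ^ k
              ≤ (Nmat η α B HR HF k).trace) ∧
          (Real.sqrt 2 * σ <
              (Real.sqrt (Crc η α B nr) + Real.sqrt (Cfc η α B nf)) *
                ((nr : ℝ) * nf) * lamMax (Dmix Cr' Cf' HR HF) →
            Tendsto (fun k => (Nmat η α B HR HF k).trace) atTop atTop)) := by
  refine ⟨1, one_pos, fun B η α HR HF hB hBnr hBnf _ _ hHR hHF hs => ?_⟩
  intro Cr' Cf' σ ⟨p₀, hp₀⟩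
  have : Nonempty (Fin d) := ⟨(Function.ne_iff.mp hp₀).choose⟩
  have : Nonempty (Fin nr × Fin nf) := ⟨p₀⟩
  have hCr := Crc_nonneg η α hB hBnr
  have hCf := Cfc_nonneg η α hB hBnf
  have hD : ∀ p, (Drf Cr' Cf' HR HF p).PosSemidef := fun p =>
    ((hHR p.1).smul (by positivity)).add ((hHF p.2).smul (by positivity))
  have hM := iSup_lamMax_Drf_pos hD hp₀
  have hcoh := mul_lamMax_Dmix_le_cohSigma_mul hD hM
  have hL : 0 ≤ (nr : ℝ) * nf * lamMax (Dmix Cr' Cf' HR HF) :=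
    mul_nonneg (by positivity) (Dmix_posSemidef hD).lamMax_nonneg
  obtain ⟨p, hp⟩ := exists_eq_ciSup_of_finite (f := fun p => lamMax (Drf Cr' Cf' HR HF p))
  have hbound : ∀ k, ((√(Crc η α B nr) + √(Cfc η α B nf)) ^ 2 * ((nr : ℝ) * nf) ^ 2 *
      lamMax (Dmix Cr' Cf' HR HF) ^ 2 / (2 * σ ^ 2)) ^ k ≤ (Nmat η α B HR HF k).trace :=
    fun k => (pow_le_pow_left₀ (by positivity) (hp ▸ sq_mul_sq_mul_sq_div_le hL hcoh) k).trans
      (pow_le_trace_Nmat hCr hCf hHR hHF (hD p) (mul_div_cancel₀ _ hs.ne')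
        (mul_div_cancel₀ _ hs.ne') k)
  refine ⟨fun k _ => (one_mul _).trans_le (hbound k), fun hlt => ?_⟩
  exact tendsto_atTop_mono hbound (tendsto_pow_atTop_atTop_of_one_lt
    (one_lt_sq_mul_sq_mul_sq_div hs.le hM hL hcoh hlt))

/-- geometric divergence of the noise accumulation.  There is a
constant `c > 0` depending only on `d`, `n_r`, `n_f` such that for every `k ≥ 1`,
`Tr(N_k) ≥ c ((√C_r + √C_f)² (n_r n_f)² λ_max(D)² / (2σ²))^k`; in particular, if
`(√C_r + √C_f) n_r n_f λ_max(D) > √2 σ` then `Tr(N_k) → ∞`. -/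
theorem stmt14 (d nr nf : ℕ) (hd : 1 ≤ d) (hnr : 1 ≤ nr) (hnf : 1 ≤ nf) :
    ∃ c : ℝ, 0 < c ∧
      ∀ (B : ℕ) (η α : ℝ)
        (HR : Fin nr → Matrix (Fin d) (Fin d) ℝ)
        (HF : Fin nf → Matrix (Fin d) (Fin d) ℝ),
        0 < B → B ≤ nr → B ≤ nf → 0 < η → α ∈ Set.Icc (0 : ℝ) 1 →
        (∀ r, (HR r).PosSemidef) → (∀ f, (HF f).PosSemidef) →
        0 < Real.sqrt (Crc η α B nr) + Real.sqrt (Cfc η α B nf) →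
        (let Cr' : ℝ := Real.sqrt (Crc η α B nr) /
            (Real.sqrt (Crc η α B nr) + Real.sqrt (Cfc η α B nf))
         let Cf' : ℝ := Real.sqrt (Cfc η α B nf) /
            (Real.sqrt (Crc η α B nr) + Real.sqrt (Cfc η α B nf))
         let σ : ℝ := cohSigma Cr' Cf' HR HF
         (∃ p : Fin nr × Fin nf, Drf Cr' Cf' HR HF p ≠ 0) →
         (∀ k, 1 ≤ k →
            c * ((Real.sqrt (Crc η α B nr) + Real.sqrt (Cfc η α B nf)) ^ 2 *
                ((nr : ℝ) * nf) ^ 2 * lamMax (Dmix Cr' Cf' HR HF) ^ 2 /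
                  (2 * σ ^ 2)) ^ k
              ≤ (Nmat η α B HR HF k).trace) ∧
          (Real.sqrt 2 * σ <
              (Real.sqrt (Crc η α B nr) + Real.sqrt (Cfc η α B nf)) *
                ((nr : ℝ) * nf) * lamMax (Dmix Cr' Cf' HR HF) →
            Tendsto (fun k => (Nmat η α B HR HF k).trace) atTop atTop)) :=
  stmt14_general d nr nf
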